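/- Let u : M → ℝ be a C² function on a closed manifold M and c a cost that is locally semi-concave where finite, with the map T : M → M̄ defined by -D_x c(x,T(x)) = Du(x). If u is NOT globally c-convex (i.e., there exist x₀ and x₁ ≠ x₀ with u(x₁) + c(x₁, T(x₀)) < u(x₀) + c(x₀, T(x₀))), then the function z ↦ u(z) + c(z, T(x₀)) attains a minimum at some point z₀ ≠ x₀ where it is differentiable, and Du(z₀) + D_x c(z₀, T(x₀)) = 0 = Du(x₀) + D_x c(x₀, T(x₀)); hence T is not injective. Consequently, if T is a global diffeomorphism, then u is globally c-convex. -/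

import Mathlib

/-!
If `u` is not `c`-convex, then for some `x₀` the function `z ↦ u z + c (z, T x₀)` is not minimal
at `x₀`; by compactness it attains its minimum at some `z₀ ≠ x₀`. By Fermat's rule `z₀` is a
critical point of this function, while by definition of `T` it is also a critical point of
`z ↦ u z + c (z, T z₀)`. Subtracting, `D_x c(z₀, T z₀) = D_x c(z₀, T x₀)`, and the twist condition
gives `T z₀ = T x₀`.
-/

open Set

section Fermat

variable {E : Type*} [NormedAddCommGroup E] [NormedSpace ℝ E]
  {H : Type*} [TopologicalSpace H] {I : ModelWithCorners ℝ E H} [I.Boundaryless]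
  {M : Type*} [TopologicalSpace M] [ChartedSpace H M]

theorem IsLocalMin.mfderiv_eq_zero {f : M → ℝ} {z : M} (h : IsLocalMin f z) :
    mfderiv I (modelWithCornersSelf ℝ ℝ) f z = 0 := by
  have hchart : IsLocalMin (f ∘ (extChartAt I z).symm) (extChartAt I z z) := by
    refine IsLocalMin.comp_continuous ?_ (continuousAt_extChartAt_symm z)
    rwa [extChartAt_to_inv]
  by_cases hf : MDifferentiableAt I (modelWithCornersSelf ℝ ℝ) f z
  · rw [hf.mfderiv]
    simp only [writtenInExtChartAt, extChartAt_model_space_eq_id, PartialEquiv.refl_coe,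
      Function.comp_def, id_eq, ModelWithCorners.Boundaryless.range_eq_univ, fderivWithin_univ]
    exact hchart.fderiv_eq_zero
  · exact mfderiv_zero_of_not_mdifferentiableAt hf

end Fermat

theorem exists_isMinOn_ne_of_lt {X : Type*} [TopologicalSpace X] [CompactSpace X]
    {f : X → ℝ} (hf : Continuous f) {x₀ x₁ : X} (h : f x₁ < f x₀) :
    ∃ z₀, z₀ ≠ x₀ ∧ IsMinOn f univ z₀ := by
  obtain ⟨z₀, -, hmin⟩ := isCompact_univ.exists_isMinOn ⟨x₀, mem_univ x₀⟩ hf.continuousOn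
  refine ⟨z₀, ?_, hmin⟩
  rintro rfl
  exact h.not_ge (isMinOn_univ_iff.mp hmin x₁)

section Critical

variable {E : Type*} [NormedAddCommGroup E] [NormedSpace ℝ E]
  {H : Type*} [TopologicalSpace H] {I : ModelWithCorners ℝ E H}
  {M : Type*} [TopologicalSpace M] [ChartedSpace H M]

theorem mfderiv_eq_of_mfderiv_add_eq_zero {f g₁ g₂ : M → ℝ} {z : M}
    (hf : MDifferentiableAt I (modelWithCornersSelf ℝ ℝ) f z)
    (hg₁ : MDifferentiableAt I (modelWithCornersSelf ℝ ℝ) g₁ z)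
    (hg₂ : MDifferentiableAt I (modelWithCornersSelf ℝ ℝ) g₂ z)
    (h₁ : mfderiv I (modelWithCornersSelf ℝ ℝ) (fun x => f x + g₁ x) z = 0)
    (h₂ : mfderiv I (modelWithCornersSelf ℝ ℝ) (fun x => f x + g₂ x) z = 0) :
    mfderiv I (modelWithCornersSelf ℝ ℝ) g₁ z = mfderiv I (modelWithCornersSelf ℝ ℝ) g₂ z := by
  have hsum₁ := (mfderiv_add hf hg₁).symm.trans h₁
  have hsum₂ := (mfderiv_add hf hg₂).symm.trans h₂
  exact add_left_cancel (G := E →L[ℝ] ℝ) (hsum₁.trans hsum₂.symm)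

end Critical

theorem stmt_19_general
    {EM : Type*} [NormedAddCommGroup EM] [NormedSpace ℝ EM]
    {HM : Type*} [TopologicalSpace HM] {IM : ModelWithCorners ℝ EM HM} [IM.Boundaryless]
    {M : Type*} [TopologicalSpace M] [ChartedSpace HM M]
    [CompactSpace M]
    {EN : Type*} [NormedAddCommGroup EN] [NormedSpace ℝ EN]
    {HN : Type*} [TopologicalSpace HN] {IN : ModelWithCorners ℝ EN HN}
    {N : Type*} [TopologicalSpace N] [ChartedSpace HN N]
    (u : M → ℝ) (c : M × N → ℝ) (T : M → N)
    (hu : ContMDiff IM (modelWithCornersSelf ℝ ℝ) (⊤ : ℕ∞) u)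
    (hc : ContMDiff (IM.prod IN) (modelWithCornersSelf ℝ ℝ) (⊤ : ℕ∞) c)
    (hT : ∀ x : M,
      mfderiv IM (modelWithCornersSelf ℝ ℝ) (fun z => u z + c (z, T x)) x = 0)
    (hinj : ∀ (z : M) (y₁ y₂ : N),
      mfderiv IM (modelWithCornersSelf ℝ ℝ) (fun z' => c (z', y₁)) z =
        mfderiv IM (modelWithCornersSelf ℝ ℝ) (fun z' => c (z', y₂)) z → y₁ = y₂) :
    (¬ (∀ x₀ x₁ : M, u x₀ + c (x₀, T x₀) ≤ u x₁ + c (x₁, T x₀)) →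
      ∃ x₀ z₀ : M, z₀ ≠ x₀ ∧
        IsMinOn (fun z => u z + c (z, T x₀)) Set.univ z₀ ∧
        mfderiv IM (modelWithCornersSelf ℝ ℝ) (fun z => u z + c (z, T x₀)) z₀ = 0 ∧
        T z₀ = T x₀ ∧ ¬ Function.Injective T) ∧
    (Function.Bijective T → ∀ x₀ x₁ : M, u x₀ + c (x₀, T x₀) ≤ u x₁ + c (x₁, T x₀)) := by
  have hc_slice (y : N) : ContMDiff IM (modelWithCornersSelf ℝ ℝ) (⊤ : ℕ∞) (fun z => c (z, y)) :=
    hc.comp (contMDiff_id.prodMk contMDiff_const)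
  have hnot_convex : ¬ (∀ x₀ x₁ : M, u x₀ + c (x₀, T x₀) ≤ u x₁ + c (x₁, T x₀)) →
      ∃ x₀ z₀ : M, z₀ ≠ x₀ ∧
        IsMinOn (fun z => u z + c (z, T x₀)) Set.univ z₀ ∧
        mfderiv IM (modelWithCornersSelf ℝ ℝ) (fun z => u z + c (z, T x₀)) z₀ = 0 ∧
        T z₀ = T x₀ ∧ ¬ Function.Injective T := by
    intro h
    push Not at h
    obtain ⟨x₀, x₁, hx₁⟩ := h
    obtain ⟨z₀, hne, hmin⟩ := exists_isMinOn_ne_of_lt (hu.add (hc_slice (T x₀))).continuous hx₁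
    have hcrit := (hmin.isLocalMin Filter.univ_mem).mfderiv_eq_zero (I := IM)
    have hTz : T z₀ = T x₀ := hinj z₀ _ _ <|
      mfderiv_eq_of_mfderiv_add_eq_zero (hu.mdifferentiableAt (by simp))
        ((hc_slice _).mdifferentiableAt (by simp)) ((hc_slice _).mdifferentiableAt (by simp))
        (hT z₀) hcrit
    exact ⟨x₀, z₀, hne, hmin, hcrit, hTz, fun hinjT => hne (hinjT hTz)⟩
  refine ⟨hnot_convex, fun hbij => ?_⟩
  by_contra h
  obtain ⟨-, -, -, -, -, -, hnot_inj⟩ := hnot_convex h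
  exact hnot_inj hbij.injective

/-- On a closed manifold `M`, if `u` is `C²` (here smooth) and `T` is defined by the
critical-point relation `D(u + c(·, T x))(x) = 0`, then failure of global `c`-convexity
produces a minimum point `z₀ ≠ x₀` of `z ↦ u z + c(z, T x₀)` at which the derivative
vanishes, forcing `T z₀ = T x₀` (so `T` is not injective); consequently, if `T` is a
global diffeomorphism (in particular bijective), then `u` is globally `c`-convex. -/
theorem stmt_19
    {EM : Type*} [NormedAddCommGroup EM] [NormedSpace ℝ EM]
    {HM : Type*} [TopologicalSpace HM] {IM : ModelWithCorners ℝ EM HM} [IM.Boundaryless]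
    {M : Type*} [TopologicalSpace M] [ChartedSpace HM M] [IsManifold IM (⊤ : ℕ∞) M]
    [CompactSpace M] [T2Space M]
    {EN : Type*} [NormedAddCommGroup EN] [NormedSpace ℝ EN]
    {HN : Type*} [TopologicalSpace HN] {IN : ModelWithCorners ℝ EN HN}
    {N : Type*} [TopologicalSpace N] [ChartedSpace HN N] [IsManifold IN (⊤ : ℕ∞) N]
    (u : M → ℝ) (c : M × N → ℝ) (T : M → N)
    (hu : ContMDiff IM (modelWithCornersSelf ℝ ℝ) (⊤ : ℕ∞) u)
    (hc : ContMDiff (IM.prod IN) (modelWithCornersSelf ℝ ℝ) (⊤ : ℕ∞) c)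
    (hT : ∀ x : M,
      mfderiv IM (modelWithCornersSelf ℝ ℝ) (fun z => u z + c (z, T x)) x = 0)
    (hinj : ∀ (z : M) (y₁ y₂ : N),
      mfderiv IM (modelWithCornersSelf ℝ ℝ) (fun z' => c (z', y₁)) z =
        mfderiv IM (modelWithCornersSelf ℝ ℝ) (fun z' => c (z', y₂)) z → y₁ = y₂) :
    (¬ (∀ x₀ x₁ : M, u x₀ + c (x₀, T x₀) ≤ u x₁ + c (x₁, T x₀)) →
      ∃ x₀ z₀ : M, z₀ ≠ x₀ ∧
        IsMinOn (fun z => u z + c (z, T x₀)) Set.univ z₀ ∧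
        mfderiv IM (modelWithCornersSelf ℝ ℝ) (fun z => u z + c (z, T x₀)) z₀ = 0 ∧
        T z₀ = T x₀ ∧ ¬ Function.Injective T) ∧
    (Function.Bijective T → ∀ x₀ x₁ : M, u x₀ + c (x₀, T x₀) ≤ u x₁ + c (x₁, T x₀)) :=
  stmt_19_general u c T hu hc hT hinj
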